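/- In the virtual-disclosure state for F's reasoning, the conclusion 'w = fail with certainty' fails: for θ = √(1/3)·|0⟩⊗|fail̄⟩⊗(|ok⟩+|fail⟩) + √(1/12)·|1⟩⊗(|ok̄⟩−|fail̄⟩)⊗(|ok⟩−|fail⟩), the conditional probability of outcome ok on the third system given outcome 1 on the first equals 1/2: (|⟨1⊗ok̄⊗ok, θ⟩|² + |⟨1⊗fail̄⊗ok, θ⟩|²) / (∑_{b,c} |⟨1⊗b⊗c, θ⟩|²) = 1/2, where b ranges over {ok̄, fail̄} and c over {ok, fail}. -/

import Mathlib

noncomputable section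
open scoped InnerProductSpace
abbrev Q : Type := EuclideanSpace ℂ (Fin 2)
abbrev QQQ : Type := EuclideanSpace ℂ (Fin 2 × Fin 2 × Fin 2)
/-- standard basis of ℂ² -/
def e (i : Fin 2) : Q := EuclideanSpace.single i 1
/-- tensor product of three qubit vectors -/
def tp3 (a b c : Q) : QQQ := WithLp.toLp 2 (fun p : Fin 2 × Fin 2 × Fin 2 => a p.1 * b p.2.1 * c p.2.2)

/-!
Projecting onto `|1⟩` on the first factor kills the `|0⟩`-branch of `θ`, so each amplitude
`⟪|1⟩ ⊗ b ⊗ c, θ⟫` is `√(1/12) ⟪b, ok̄ - fail̄⟫ ⟪c, ok - fail⟫`. By orthonormality both inner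
products have modulus one for every basis vector `b`, `c`, so all four outcomes are equally
likely and the two with `c = ok` carry half of the probability.
-/

section Orthonormal

variable {𝕜 E : Type*} [RCLike 𝕜] [NormedAddCommGroup E] [InnerProductSpace 𝕜 E] {u v : E}

theorem Orthonormal.norm_inner_sub_of_left (h : Orthonormal 𝕜 ![u, v]) : ‖⟪u, u - v⟫_𝕜‖ = 1 := by
  have huv : ⟪u, v⟫_𝕜 = 0 := by simpa using h.inner_eq_zero (i := 0) (j := 1) (by decide)
  have hu : ‖u‖ = 1 := by simpa using h.1 0
  simp [inner_sub_right, huv, inner_self_eq_norm_sq_to_K, hu]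

theorem Orthonormal.norm_inner_sub_of_right (h : Orthonormal 𝕜 ![u, v]) : ‖⟪v, u - v⟫_𝕜‖ = 1 := by
  have hvu : ⟪v, u⟫_𝕜 = 0 := by simpa using h.inner_eq_zero (i := 1) (j := 0) (by decide)
  have hv : ‖v‖ = 1 := by simpa using h.1 1
  simp [inner_sub_right, hvu, inner_self_eq_norm_sq_to_K, hv]

end Orthonormal

theorem inner_tp3 (a b c a' b' c' : Q) :
    ⟪tp3 a b c, tp3 a' b' c'⟫_ℂ = ⟪a, a'⟫_ℂ * ⟪b, b'⟫_ℂ * ⟪c, c'⟫_ℂ := by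
  simp only [tp3, PiLp.inner_apply, RCLike.inner_apply, map_mul, Fintype.sum_prod_type,
    Fin.sum_univ_two]
  ring

theorem inner_e (i j : Fin 2) : ⟪e i, e j⟫_ℂ = if i = j then 1 else 0 := by
  simp [e, EuclideanSpace.inner_single_left]

theorem inner_tp3_e_one_smul_add (α β : ℂ) (b c x y z w : Q) :
    ⟪tp3 (e 1) b c, α • tp3 (e 0) x y + β • tp3 (e 1) z w⟫_ℂ = β * ⟪b, z⟫_ℂ * ⟪c, w⟫_ℂ := by
  rw [inner_add_right, inner_smul_right, inner_smul_right, inner_tp3, inner_tp3, inner_e,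
    inner_e]
  simp only [Fin.reduceEq, if_false, if_true]
  ring

theorem conditional_ok_given_disclosure_half (okb failb okv failv : Q)
    (h1 : Orthonormal ℂ ![okb, failb]) (h2 : Orthonormal ℂ ![okv, failv]) :
    let θ : QQQ := (Real.sqrt (1/3) : ℂ) • tp3 (e 0) failb (okv + failv) +
      (Real.sqrt (1/12) : ℂ) • tp3 (e 1) (okb - failb) (okv - failv)
    (‖⟪tp3 (e 1) okb okv, θ⟫_ℂ‖ ^ 2 + ‖⟪tp3 (e 1) failb okv, θ⟫_ℂ‖ ^ 2) /
      (‖⟪tp3 (e 1) okb okv, θ⟫_ℂ‖ ^ 2 + ‖⟪tp3 (e 1) okb failv, θ⟫_ℂ‖ ^ 2 +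
        ‖⟪tp3 (e 1) failb okv, θ⟫_ℂ‖ ^ 2 + ‖⟪tp3 (e 1) failb failv, θ⟫_ℂ‖ ^ 2) = 1 / 2 := by
  intro θ
  have amplitude_sq (b c : Q) (hb : ‖⟪b, okb - failb⟫_ℂ‖ = 1)
      (hc : ‖⟪c, okv - failv⟫_ℂ‖ = 1) : ‖⟪tp3 (e 1) b c, θ⟫_ℂ‖ ^ 2 = 1 / 12 := by
    rw [inner_tp3_e_one_smul_add, norm_mul, norm_mul, hb, hc, Complex.norm_real,
      Real.norm_of_nonneg (Real.sqrt_nonneg _), mul_one, mul_one, Real.sq_sqrt (by norm_num)]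
  rw [amplitude_sq okb okv h1.norm_inner_sub_of_left h2.norm_inner_sub_of_left,
    amplitude_sq okb failv h1.norm_inner_sub_of_left h2.norm_inner_sub_of_right,
    amplitude_sq failb okv h1.norm_inner_sub_of_right h2.norm_inner_sub_of_left,
    amplitude_sq failb failv h1.norm_inner_sub_of_right h2.norm_inner_sub_of_right]
  norm_num
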